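/- arXiv:0905.4648 — 2 statements merged into one kernel-verified Lean document; each statement's English description precedes it below -/
import Mathlib

section
/- Let n ≥ 3 be odd and F a field, and for each m ∈ {0,...,n} let q_m := Σ_{i=0}^{m-1} (-1)^{i+m+1} e_i + Σ_{k=m+1}^{n} (-1)^{k+m} e_k ∈ F^{n+1}. Then for all l, m ∈ {0,...,n}: the vector q_m lies in the span of { e_j : j ≠ l } if and only if l = m. Consequently, each vertex Q_m = F·q_m of the simplex Q is incident with exactly one hyperplanar face of the simplex P = { F·e_0, ..., F·e_n }, namely the face spanned by { P_j : j ≠ m }. -/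
/-- The vector `q_m = Σ_{i<m} (-1)^{i+m+1} e_i + Σ_{k>m} (-1)^{k+m} e_k`. -/
def moebiusQ (F : Type*) [Field F] (n : ℕ) (m : Fin (n + 1)) : Fin (n + 1) → F :=
  (∑ i ∈ Finset.univ.filter (fun i : Fin (n + 1) => i < m),
      ((-1 : F) ^ ((i : ℕ) + (m : ℕ) + 1)) • (Pi.single i (1 : F) : Fin (n + 1) → F)) +
  (∑ k ∈ Finset.univ.filter (fun k : Fin (n + 1) => m < k),
      ((-1 : F) ^ ((k : ℕ) + (m : ℕ))) • (Pi.single k (1 : F) : Fin (n + 1) → F))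

lemma moebiusQ_apply (F : Type*) [Field F] (n : ℕ) (m l : Fin (n + 1)) :
    moebiusQ F n m l =
      if l < m then (-1 : F) ^ ((l : ℕ) + (m : ℕ) + 1)
      else if m < l then (-1 : F) ^ ((l : ℕ) + (m : ℕ)) else 0 := by
  classical
  simp only [moebiusQ, Pi.add_apply, Finset.sum_apply, Pi.smul_apply, Pi.single_apply,
    smul_eq_mul, mul_ite, mul_one, mul_zero]
  rw [Finset.sum_ite_eq _ l, Finset.sum_ite_eq _ l]
  simp only [Finset.mem_filter, Finset.mem_univ, true_and]
  rcases lt_trichotomy l m with h | h | h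
  · simp [h, not_lt.2 h.le, h.not_gt]
  · simp [h, lt_irrefl]
  · simp [h, not_lt.2 h.le, h.not_gt]

theorem stmt_7 (F : Type*) [Field F] (n : ℕ) (hn : 3 ≤ n) (hodd : Odd n) :
    ∀ l m : Fin (n + 1),
      (moebiusQ F n m ∈
        Submodule.span F
          {v | ∃ j : Fin (n + 1), j ≠ l ∧ v = (Pi.single j (1 : F) : Fin (n + 1) → F)}) ↔
      l = m := by
  intro l m
  constructor
  · intro hmem
    by_contra hne
    have hl0 : moebiusQ F n m l = 0 := by
      have hle : Submodule.span F
          {v | ∃ j : Fin (n + 1), j ≠ l ∧ v = (Pi.single j (1 : F) : Fin (n + 1) → F)} ≤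
          LinearMap.ker (LinearMap.proj l : (Fin (n + 1) → F) →ₗ[F] F) := by
        rw [Submodule.span_le]
        rintro v ⟨j, hj, rfl⟩
        simp [LinearMap.mem_ker, Pi.single_apply, hj]
      exact hle hmem
    rw [moebiusQ_apply] at hl0
    rcases lt_trichotomy l m with h | h | h
    · rw [if_pos h] at hl0
      exact (pow_ne_zero _ (neg_ne_zero.2 one_ne_zero)) hl0
    · exact hne h
    · rw [if_neg h.not_gt, if_pos h] at hl0
      exact (pow_ne_zero _ (neg_ne_zero.2 one_ne_zero)) hl0
  · rintro rfl
    unfold moebiusQ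
    apply Submodule.add_mem
    · apply Submodule.sum_mem
      intro j hj
      simp only [Finset.mem_filter, Finset.mem_univ, true_and] at hj
      exact Submodule.smul_mem _ _ (Submodule.subset_span ⟨j, hj.ne, rfl⟩)
    · apply Submodule.sum_mem
      intro j hj
      simp only [Finset.mem_filter, Finset.mem_univ, true_and] at hj
      exact Submodule.smul_mem _ _ (Submodule.subset_span ⟨j, hj.ne', rfl⟩)
end

section
/- Let X_0 = σ_x⊗σ_0⊗σ_0, X_1 = σ_y⊗σ_0⊗σ_0, X_2 = σ_z⊗σ_x⊗σ_0, X_3 = σ_z⊗σ_y⊗σ_0, X_4 = σ_z⊗σ_z⊗σ_x, X_5 = σ_z⊗σ_z⊗σ_y, and let Y_0 = σ_y⊗σ_z⊗σ_z, Y_1 = σ_x⊗σ_z⊗σ_z, Y_2 = σ_0⊗σ_y⊗σ_z, Y_3 = σ_0⊗σ_x⊗σ_z, Y_4 = σ_0⊗σ_0⊗σ_y, Y_5 = σ_0⊗σ_0⊗σ_x. Then for all i, j ∈ {0,...,5}, the matrices X_i and Y_j commute if and only if i ≠ j. -/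
open Matrix Kronecker Complex

/-- The Pauli matrices `σ_0, σ_x, σ_y, σ_z` (indexed by `0, 1, 2, 3`). -/
def pauli : Fin 4 → Matrix (Fin 2) (Fin 2) ℂ :=
  ![1, !![0, 1; 1, 0], !![0, -I; I, 0], !![1, 0; 0, -1]]

/-- The three-fold Kronecker product `σ_β ⊗ σ_γ ⊗ σ_δ`. -/
def pauli3 (β γ δ : Fin 4) :
    Matrix (Fin 2 × Fin 2 × Fin 2) (Fin 2 × Fin 2 × Fin 2) ℂ :=
  pauli β ⊗ₖ (pauli γ ⊗ₖ pauli δ)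

/-- The six operators `X_0,…,X_5` representing the first simplex `P` of the Möbius pair:
`σ_x⊗σ_0⊗σ_0, σ_y⊗σ_0⊗σ_0, σ_z⊗σ_x⊗σ_0, σ_z⊗σ_y⊗σ_0, σ_z⊗σ_z⊗σ_x, σ_z⊗σ_z⊗σ_y`. -/
def Xop : Fin 6 → Matrix (Fin 2 × Fin 2 × Fin 2) (Fin 2 × Fin 2 × Fin 2) ℂ :=
  ![pauli3 1 0 0, pauli3 2 0 0, pauli3 3 1 0, pauli3 3 2 0, pauli3 3 3 1, pauli3 3 3 2]

/-- The six operators `Y_0,…,Y_5` representing the second simplex `Q` of the Möbius pair: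
`σ_y⊗σ_z⊗σ_z, σ_x⊗σ_z⊗σ_z, σ_0⊗σ_y⊗σ_z, σ_0⊗σ_x⊗σ_z, σ_0⊗σ_0⊗σ_y, σ_0⊗σ_0⊗σ_x`. -/
def Yop : Fin 6 → Matrix (Fin 2 × Fin 2 × Fin 2) (Fin 2 × Fin 2 × Fin 2) ℂ :=
  ![pauli3 2 3 3, pauli3 1 3 3, pauli3 0 2 3, pauli3 0 1 3, pauli3 0 0 2, pauli3 0 0 1]

noncomputable def ε (a b : Fin 4) : ℂ :=
  if a = 0 ∨ b = 0 ∨ a = b then 1 else -1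

lemma psign (a b : Fin 4) : pauli a * pauli b = ε a b • (pauli b * pauli a) := by
  fin_cases a <;> fin_cases b <;>
    · ext i j
      fin_cases i <;> fin_cases j <;>
        simp [pauli, ε, Matrix.mul_apply, Fin.sum_univ_two] <;> ring

lemma psq (a : Fin 4) : pauli a * pauli a = 1 := by
  fin_cases a <;>
    · ext i j
      fin_cases i <;> fin_cases j <;>
        simp [pauli, Matrix.mul_apply, Fin.sum_univ_two, Matrix.one_apply] <;> ring

lemma p3sign (a b c d e f : Fin 4) :
    pauli3 a b c * pauli3 d e f =
      (ε a d * ε b e * ε c f) • (pauli3 d e f * pauli3 a b c) := by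
  simp only [pauli3, ← Matrix.mul_kronecker_mul, psign a d, psign b e, psign c f,
    Matrix.smul_kronecker, Matrix.kronecker_smul, smul_smul]
  ring_nf

lemma p3sq (a b c : Fin 4) : pauli3 a b c * pauli3 a b c = 1 := by
  simp only [pauli3, ← Matrix.mul_kronecker_mul, psq, Matrix.one_kronecker_one]

lemma ne_case {a b c d e f : Fin 4} (h : ε a d * ε b e * ε c f = 1) :
    pauli3 a b c * pauli3 d e f = pauli3 d e f * pauli3 a b c := by
  rw [p3sign, h, one_smul]

lemma eq_case {a b c d e f : Fin 4} (h : ε a d * ε b e * ε c f = -1) :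
    pauli3 a b c * pauli3 d e f ≠ pauli3 d e f * pauli3 a b c := by
  intro hE
  have h1 := p3sign a b c d e f
  rw [h, hE, neg_one_smul] at h1
  have h0 : pauli3 d e f * pauli3 a b c = 0 := by
    have h2 : (2:ℂ) • (pauli3 d e f * pauli3 a b c) = 0 := by
      rw [two_smul]; nth_rewrite 1 [h1]; exact neg_add_cancel _
    simpa using h2
  have : (pauli3 d e f * pauli3 a b c) * (pauli3 a b c * pauli3 d e f) = 1 := by
    rw [mul_assoc, ← mul_assoc (pauli3 a b c), p3sq, one_mul, p3sq]
  rw [h0, zero_mul] at this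
  exact one_ne_zero this.symm

theorem stmt_17 : ∀ i j : Fin 6, Xop i * Yop j = Yop j * Xop i ↔ i ≠ j := by
  intro i j
  fin_cases i <;> fin_cases j <;>
    simp only [Xop, Yop, Matrix.cons_val_zero, Matrix.cons_val_one, Matrix.head_cons,
      Matrix.cons_val_fin_one, Fin.isValue] <;>
    first
    | (refine iff_of_true (ne_case ?_) (by decide)
       simp (config := { decide := true }) only [ε]; norm_num)
    | (refine iff_of_false (eq_case ?_) (by decide)
       simp (config := { decide := true }) only [ε]; norm_num)
end
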